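/- arXiv:math/0406337 — 2 statements merged into one kernel-verified Lean document; each statement's English description precedes it below -/
import Mathlib

section
/- For all natural numbers m ≥ 2 and n ≥ 2 with 2m ≠ n + 2, the coefficients satisfy the five-part recursion (2m − n − 2) · t_m(n) = −2(n − 2m + 4)·t_{m-1}(n) + (n − 2m + 6)·t_{m-2}(n) − (4(n+1)/(2m+n))·t_m(n-1) + (4(n+2)/(2m+n−2))·t_{m-1}(n-1) + (4/(2m+n−1))·t_m(n-2). -/
/-- The coefficients `t_k(n)`: `t_k(0) = 1` and
`t_k(n) = ∑_{m=0}^{k} t_m(n-1)/(m + n/2)` for `n ≥ 1`. -/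
noncomputable def t : ℕ → ℕ → ℝ
  | _, 0 => 1
  | k, n + 1 => ∑ m ∈ Finset.range (k + 1), t m n / ((m : ℝ) + ((n : ℝ) + 1) / 2)

/-! Every term of the recursion can be rewritten through the step relation
`t_{k+1}(n+1) = t_k(n+1) + t_{k+1}(n) / (k + 1 + (n+1)/2)`, read backwards as
`t_{k+1}(n) = (k + 1 + (n+1)/2) (t_{k+1}(n+1) - t_k(n+1))`. Applying it to `t_m(n-2)`, then to
`t_m(n-1)` and `t_{m-1}(n-1)`, expresses the right-hand side through `t_m(n)`, `t_{m-1}(n)` and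
`t_{m-2}(n)` alone, and the recursion becomes a rational-function identity. -/

theorem t_succ_succ (k n : ℕ) :
    t (k + 1) (n + 1) = t k (n + 1) + t (k + 1) n / ((k : ℝ) + 1 + ((n : ℝ) + 1) / 2) := by
  simp [t, Finset.sum_range_succ]

theorem t_succ_eq_mul_sub (k n : ℕ) :
    t (k + 1) n = ((k : ℝ) + 1 + ((n : ℝ) + 1) / 2) * (t (k + 1) (n + 1) - t k (n + 1)) := by
  have hpos : (0 : ℝ) < (k : ℝ) + 1 + ((n : ℝ) + 1) / 2 := by positivity
  rw [t_succ_succ, add_sub_cancel_left, mul_div_cancel₀ _ hpos.ne']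

theorem t_five_part_recursion_general (m n : ℕ) (hm : 2 ≤ m) (hn : 2 ≤ n) :
    (2 * (m : ℝ) - (n : ℝ) - 2) * t m n =
      -2 * ((n : ℝ) - 2 * (m : ℝ) + 4) * t (m - 1) n +
        ((n : ℝ) - 2 * (m : ℝ) + 6) * t (m - 2) n -
        (4 * ((n : ℝ) + 1) / (2 * (m : ℝ) + (n : ℝ))) * t m (n - 1) +
        (4 * ((n : ℝ) + 2) / (2 * (m : ℝ) + (n : ℝ) - 2)) * t (m - 1) (n - 1) +
        (4 / (2 * (m : ℝ) + (n : ℝ) - 1)) * t m (n - 2) := by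
  obtain ⟨a, rfl⟩ : ∃ a, m = a + 2 := ⟨m - 2, by omega⟩
  obtain ⟨b, rfl⟩ : ∃ b, n = b + 2 := ⟨n - 2, by omega⟩
  simp only [Nat.add_sub_cancel, show a + 2 - 1 = a + 1 from rfl, show b + 2 - 1 = b + 1 from rfl]
  rw [t_succ_eq_mul_sub (a + 1) b, t_succ_eq_mul_sub (a + 1) (b + 1), t_succ_eq_mul_sub a (b + 1)]
  have ha : (0 : ℝ) ≤ a := a.cast_nonneg
  have hb : (0 : ℝ) ≤ b := b.cast_nonneg
  have h₁ : (2 * ((a : ℝ) + 2) + ((b : ℝ) + 2) - 2) ≠ 0 := by linarith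
  have h₂ : (2 * ((a : ℝ) + 2) + ((b : ℝ) + 2) - 1) ≠ 0 := by linarith
  push_cast
  field_simp
  ring

/-- Equation (22) of the paper: the five-part recursion, for `m ≥ 2`, `n ≥ 2`,
`2m ≠ n + 2`:
`(2m − n − 2)·t_m(n) = −2(n − 2m + 4)·t_{m-1}(n) + (n − 2m + 6)·t_{m-2}(n)
  − (4(n+1)/(2m+n))·t_m(n-1) + (4(n+2)/(2m+n−2))·t_{m-1}(n-1)
  + (4/(2m+n−1))·t_m(n-2)`. -/
theorem t_five_part_recursion (m n : ℕ) (hm : 2 ≤ m) (hn : 2 ≤ n)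
    (h : 2 * m ≠ n + 2) :
    (2 * (m : ℝ) - (n : ℝ) - 2) * t m n =
      -2 * ((n : ℝ) - 2 * (m : ℝ) + 4) * t (m - 1) n +
        ((n : ℝ) - 2 * (m : ℝ) + 6) * t (m - 2) n -
        (4 * ((n : ℝ) + 1) / (2 * (m : ℝ) + (n : ℝ))) * t m (n - 1) +
        (4 * ((n : ℝ) + 2) / (2 * (m : ℝ) + (n : ℝ) - 2)) * t (m - 1) (n - 1) +
        (4 / (2 * (m : ℝ) + (n : ℝ) - 1)) * t m (n - 2) :=
  t_five_part_recursion_general m n hm hn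
end

section
/- For every natural number n ≥ 1, the partial sums ∑_{m=0}^{K} (−1)^m · t_m(n-1)/(m + n/2) converge as K → ∞ to π^n / (2^n · n!). -/
/-!
Write `u_n(m) = t_m(n) / (m + (n+1)/2)` (`tSummand n m`), so that
`t_k(n+1) = ∑_{m ≤ k} u_n(m)`. On the level of generating functions this reads
`(1 + s²) ∑ (-1)^m t_m(n+1) s^{2m} = ∑ (-1)^m u_n(m) s^{2m}`, while
`u_n(m) s^{2m+n+1} = ∫₀ˢ 2 t_m(n) σ^{2m+n} dσ`. Starting from the geometric series
`∑ (-1)^m s^{2m} = 1/(1+s²)`, induction on `n` gives, for `0 ≤ s < 1`,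
`∑ (-1)^m u_n(m) s^{2m+n+1} = (2 arctan s)^{n+1} / (n+1)!`.
The bound `t_m(n) ≤ 4^n √(m+1)` makes `u_n(m)` tend to `0` with summable variation, so the
alternating series `∑ (-1)^m u_n(m)` converges (Dirichlet's test), and Abel's limit theorem
identifies its sum with the value `(π/2)^{n+1} / (n+1)!` of the closed form at `s = 1`.
-/

open Filter Real

open Finset Topology Nat

section Dirichlet

variable {E : Type*} [NormedAddCommGroup E] [NormedSpace ℝ E] [CompleteSpace E]

theorem exists_tendsto_series_smul_of_tendsto_zero_of_summable_abs_sub {b : ℝ} {f : ℕ → ℝ}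
    {z : ℕ → E} (hf0 : Tendsto f atTop (𝓝 0)) (hf : Summable fun n ↦ |f n - f (n + 1)|)
    (hz : ∀ n, ‖∑ i ∈ range n, z i‖ ≤ b) :
    ∃ l, Tendsto (fun n ↦ ∑ i ∈ range n, f i • z i) atTop (𝓝 l) := by
  set Z : ℕ → E := fun n ↦ ∑ i ∈ range n, z i
  have hparts : ∀ n, ∑ i ∈ range (n + 1), f i • z i =
      f n • Z (n + 1) - ∑ i ∈ range n, (f (i + 1) - f i) • Z (i + 1) := fun n ↦ by
    simpa using sum_range_by_parts f z (n + 1)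
  have hboundary : Tendsto (fun n ↦ f n • Z (n + 1)) atTop (𝓝 0) :=
    NormedField.tendsto_zero_smul_of_tendsto_zero_of_bounded hf0
      ⟨b, eventually_map.mpr <| .of_forall fun n ↦ hz (n + 1)⟩
  have hvar : Summable fun i ↦ (f (i + 1) - f i) • Z (i + 1) := by
    refine (hf.mul_right b).of_norm_bounded fun i ↦ ?_
    rw [norm_smul, Real.norm_eq_abs, abs_sub_comm]
    exact mul_le_mul_of_nonneg_left (hz _) (abs_nonneg _)
  refine ⟨0 - ∑' i, (f (i + 1) - f i) • Z (i + 1), (tendsto_add_atTop_iff_nat 1).mp ?_⟩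
  simp only [hparts]
  exact hboundary.sub hvar.hasSum.tendsto_sum_nat

theorem exists_tendsto_alternating_series_of_tendsto_zero_of_summable_abs_sub {f : ℕ → ℝ}
    (hf0 : Tendsto f atTop (𝓝 0)) (hf : Summable fun n ↦ |f n - f (n + 1)|) :
    ∃ l, Tendsto (fun n ↦ ∑ i ∈ range n, (-1) ^ i * f i) atTop (𝓝 l) := by
  simp_rw [mul_comm ((-1 : ℝ) ^ _)]
  exact exists_tendsto_series_smul_of_tendsto_zero_of_summable_abs_sub hf0 hf
    norm_sum_neg_one_pow_le

end Dirichlet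

theorem hasSum_integral_tsum_mul_pow (c : ℕ → ℝ) (e : ℕ → ℕ) {y : ℝ} (hy : 0 ≤ y)
    (hc : Summable fun m ↦ |c m| * y ^ e m) :
    HasSum (fun m ↦ c m * y ^ (e m + 1) / (e m + 1))
      (∫ s in (0)..y, ∑' m, c m * s ^ e m) := by
  have hbound : ∀ m, ∀ s ∈ Set.uIoc 0 y, ‖c m * s ^ e m‖ ≤ |c m| * y ^ e m := by
    intro m s hs
    rw [Set.uIoc_of_le hy] at hs
    rw [norm_mul, norm_pow, Real.norm_eq_abs, Real.norm_eq_abs, abs_of_pos hs.1]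
    exact mul_le_mul_of_nonneg_left (pow_le_pow_left₀ hs.1.le hs.2 _) (abs_nonneg _)
  have hsum := intervalIntegral.hasSum_integral_of_dominated_convergence
    (μ := MeasureTheory.volume) (F := fun m s ↦ c m * s ^ e m) (fun m _ ↦ |c m| * y ^ e m)
    (fun m ↦ (continuous_const.mul (continuous_pow _)).aestronglyMeasurable)
    (fun m ↦ .of_forall (hbound m)) (.of_forall fun _ _ ↦ hc) intervalIntegrable_const
    (.of_forall fun s hs ↦ (hc.of_norm_bounded fun m ↦ hbound m s hs).hasSum)
  have hterm : ∀ m, ∫ s in (0)..y, c m * s ^ e m = c m * y ^ (e m + 1) / (e m + 1) := by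
    intro m
    rw [intervalIntegral.integral_const_mul, integral_pow]
    simp [mul_div_assoc]
  simpa only [hterm] using hsum

theorem integral_two_arctan_pow (n : ℕ) (y : ℝ) :
    ∫ s in (0)..y, 2 * (2 * arctan s) ^ n / (n ! * (1 + s ^ 2))
      = (2 * arctan y) ^ (n + 1) / (n + 1)! := by
  have hderiv : ∀ s, HasDerivAt (fun s ↦ (2 * arctan s) ^ (n + 1) / (n + 1)!)
      (2 * (2 * arctan s) ^ n / (n ! * (1 + s ^ 2))) s := by
    intro s
    refine ((((hasDerivAt_arctan s).const_mul 2).pow (n + 1)).div_const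
      ((n + 1)! : ℝ)).congr_deriv ?_
    rw [Nat.factorial_succ]
    push_cast
    field_simp
  have hcont : Continuous fun s : ℝ ↦ 2 * (2 * arctan s) ^ n / (n ! * (1 + s ^ 2)) := by
    fun_prop (disch := intro s; positivity)
  rw [intervalIntegral.integral_eq_sub_of_hasDerivAt (fun s _ ↦ hderiv s)
    (hcont.intervalIntegrable 0 y)]
  simp

noncomputable def tSummand (n m : ℕ) : ℝ := t m n / ((m : ℝ) + ((n : ℝ) + 1) / 2)

theorem t_zero (k : ℕ) : t k 0 = 1 := rfl

theorem t_succ (k n : ℕ) : t k (n + 1) = ∑ m ∈ range (k + 1), tSummand n m := rfl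

theorem t_succ_sub_t (m n : ℕ) : t (m + 1) (n + 1) - t m (n + 1) = tSummand n (m + 1) := by
  rw [t_succ, t_succ, sum_range_succ, add_sub_cancel_left]

theorem t_pos (k n : ℕ) : 0 < t k n := by
  induction n generalizing k with
  | zero => exact one_pos
  | succ n ih => exact sum_pos (fun m _ ↦ div_pos (ih m) (by positivity)) nonempty_range_add_one

theorem tSummand_pos (n m : ℕ) : 0 < tSummand n m := div_pos (t_pos m n) (by positivity)

theorem t_le_t_succ (m n : ℕ) : t m n ≤ t (m + 1) n := by
  cases n with
  | zero => rfl
  | succ n => linarith [t_succ_sub_t m n, tSummand_pos n (m + 1)]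

theorem tSummand_le_of_t_le {n m : ℕ} {C : ℝ} (h : t m n ≤ C * √(m + 1 : ℝ)) :
    tSummand n m ≤ 2 * C * (√(m + 1 : ℝ))⁻¹ := by
  have hx : (0 : ℝ) < m + 1 := by positivity
  calc tSummand n m ≤ 2 * t m n / (m + 1) := by
        rw [tSummand, div_le_div_iff₀ (by positivity) hx]
        nlinarith [t_pos m n, (n.cast_nonneg : (0 : ℝ) ≤ n)]
    _ ≤ 2 * (C * √(m + 1 : ℝ)) / (m + 1) := by gcongr
    _ = 2 * C * (√(m + 1 : ℝ))⁻¹ := by rw [← Real.sqrt_div_self]; ring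

theorem sum_range_inv_sqrt_le (k : ℕ) :
    ∑ m ∈ range (k + 1), (√(m + 1 : ℝ))⁻¹ ≤ 2 * √(k + 1 : ℝ) := by
  induction k with
  | zero => norm_num
  | succ k ih =>
    rw [sum_range_succ]
    push_cast
    have ha := Real.sq_sqrt (by positivity : (0 : ℝ) ≤ k + 1)
    have hb := Real.sq_sqrt (by positivity : (0 : ℝ) ≤ k + 1 + 1)
    have hb0 : 0 < √(k + 1 + 1 : ℝ) := by positivity
    have : (√(k + 1 + 1 : ℝ))⁻¹ ≤ 2 * √(k + 1 + 1 : ℝ) - 2 * √(k + 1 : ℝ) := by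
      rw [inv_le_iff_one_le_mul₀' hb0]
      nlinarith [sq_nonneg (√(k + 1 : ℝ) - √(k + 1 + 1 : ℝ))]
    linarith

theorem t_le (n k : ℕ) : t k n ≤ 4 ^ n * √(k + 1 : ℝ) := by
  induction n generalizing k with
  | zero => simp only [t_zero, pow_zero, one_mul]; exact Real.one_le_sqrt.mpr (by simp)
  | succ n ih =>
    calc t k (n + 1) ≤ ∑ m ∈ range (k + 1), 2 * 4 ^ n * (√(m + 1 : ℝ))⁻¹ :=
          sum_le_sum fun m _ ↦ tSummand_le_of_t_le (ih m)
      _ ≤ 4 ^ (n + 1) * √(k + 1 : ℝ) := by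
          rw [← mul_sum, pow_succ]
          nlinarith [sum_range_inv_sqrt_le k, pow_pos (by norm_num : (0 : ℝ) < 4) n]

theorem tSummand_le (n m : ℕ) : tSummand n m ≤ 2 * 4 ^ n * (√(m + 1 : ℝ))⁻¹ :=
  tSummand_le_of_t_le (t_le n m)

theorem tendsto_tSummand (n : ℕ) : Tendsto (tSummand n) atTop (𝓝 0) := by
  have hsqrt : Tendsto (fun m : ℕ ↦ √(m + 1 : ℝ)) atTop atTop :=
    tendsto_sqrt_atTop.comp (tendsto_atTop_add_const_right _ 1 tendsto_natCast_atTop_atTop)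
  refine squeeze_zero (fun m ↦ (tSummand_pos n m).le) (tSummand_le n) ?_
  simpa using hsqrt.inv_tendsto_atTop.const_mul (2 * 4 ^ n : ℝ)

theorem t_succ_sub_t_le (n m : ℕ) :
    t (m + 1) n - t m n ≤ 2 * 4 ^ n * (√(m + 1 : ℝ))⁻¹ := by
  cases n with
  | zero => simp only [t_zero, sub_self]; positivity
  | succ n =>
    rw [t_succ_sub_t]
    calc tSummand n (m + 1) ≤ 2 * 4 ^ n * (√((m + 1 : ℕ) + 1 : ℝ))⁻¹ :=
          tSummand_le n (m + 1)
      _ ≤ 2 * 4 ^ (n + 1) * (√(m + 1 : ℝ))⁻¹ := by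
        gcongr
        · norm_num
        · norm_num
        · linarith

theorem tSummand_sub_tSummand_succ (n m : ℕ) :
    tSummand n m - tSummand n (m + 1) =
      (tSummand n m - (t (m + 1) n - t m n)) / (m + 1 + ((n : ℝ) + 1) / 2) := by
  simp only [tSummand]
  push_cast
  field_simp
  ring

theorem abs_tSummand_sub_tSummand_succ_le (n m : ℕ) :
    |tSummand n m - tSummand n (m + 1)| ≤ 4 ^ (n + 1) * ((m + 1) * √(m + 1 : ℝ))⁻¹ := by
  have hu := tSummand_pos n m
  have hδ := sub_nonneg.mpr (t_le_t_succ m n)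
  rw [tSummand_sub_tSummand_succ, abs_div,
    abs_of_pos (by positivity : (0 : ℝ) < m + 1 + (n + 1) / 2)]
  calc |tSummand n m - (t (m + 1) n - t m n)| / (m + 1 + ((n : ℝ) + 1) / 2)
      ≤ (tSummand n m + (t (m + 1) n - t m n)) / (m + 1) := by
        refine div_le_div₀ (by positivity) (abs_sub_le_iff.mpr ⟨by linarith, by linarith⟩)
          (by positivity) ?_
        linarith [(n.cast_nonneg : (0 : ℝ) ≤ n)]
    _ ≤ (2 * 4 ^ n * (√(m + 1 : ℝ))⁻¹ + 2 * 4 ^ n * (√(m + 1 : ℝ))⁻¹) / (m + 1) :=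
        by gcongr; exacts [tSummand_le n m, t_succ_sub_t_le n m]
    _ = 4 ^ (n + 1) * ((m + 1) * √(m + 1 : ℝ))⁻¹ := by
        rw [mul_inv]; ring

theorem summable_inv_mul_sqrt : Summable fun m : ℕ ↦ ((m + 1) * √(m + 1 : ℝ))⁻¹ := by
  refine ((Real.summable_one_div_nat_add_rpow 1 (3 / 2)).mpr (by norm_num)).congr fun m ↦ ?_
  have hx : (0 : ℝ) < m + 1 := by positivity
  rw [abs_of_pos hx, one_div, Real.sqrt_eq_rpow, ← Real.rpow_one_add' hx.le (by norm_num)]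
  norm_num

theorem summable_abs_tSummand_sub_tSummand_succ (n : ℕ) :
    Summable fun m ↦ |tSummand n m - tSummand n (m + 1)| :=
  Summable.of_nonneg_of_le (fun _ ↦ abs_nonneg _) (abs_tSummand_sub_tSummand_succ_le n)
    (summable_inv_mul_sqrt.mul_left _)

theorem summable_t_mul_pow (n : ℕ) {r : ℝ} (hr0 : 0 ≤ r) (hr1 : r < 1) :
    Summable fun m ↦ t m n * r ^ m := by
  have hgeom : Summable fun m : ℕ ↦ ((m : ℝ) + 1) * r ^ m := by
    have hr : ‖r‖ < 1 := by rwa [Real.norm_eq_abs, abs_of_nonneg hr0]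
    simpa [add_mul] using (summable_pow_mul_geometric_of_norm_lt_one 1 hr).add
      (summable_geometric_of_lt_one hr0 hr1)
  refine Summable.of_nonneg_of_le (fun m ↦ by have := t_pos m n; positivity) (fun m ↦ ?_)
    (hgeom.mul_left (4 ^ n))
  rw [← mul_assoc]
  gcongr
  refine (t_le n m).trans ?_
  gcongr
  exact Real.sqrt_le_left (by positivity) |>.mpr (by nlinarith)

theorem hasSum_t_zero_mul_pow {s : ℝ} (hs : |s| < 1) :
    HasSum (fun m ↦ (-1) ^ m * t m 0 * s ^ (2 * m)) (1 + s ^ 2)⁻¹ := by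
  have h : ‖-s ^ 2‖ < 1 := by
    rw [norm_neg, norm_pow, Real.norm_eq_abs, sq_lt_one_iff_abs_lt_one, abs_abs]; exact hs
  have hterm : (fun m ↦ (-1) ^ m * t m 0 * s ^ (2 * m)) = fun m ↦ (-s ^ 2) ^ m := by
    ext m; rw [t_zero, pow_mul, neg_pow]; ring
  rw [hterm, ← sub_neg_eq_add]
  exact hasSum_geometric_of_norm_lt_one h

theorem hasSum_tSummand_mul_pow_of_hasSum_t_succ (n : ℕ) {s G : ℝ}
    (hG : HasSum (fun m ↦ (-1) ^ m * t m (n + 1) * s ^ (2 * m)) G) :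
    HasSum (fun m ↦ (-1) ^ m * tSummand n m * s ^ (2 * m)) ((1 + s ^ 2) * G) := by
  set c : ℕ → ℝ := fun m ↦ (-1) ^ m * t m (n + 1) * s ^ (2 * m)
  rw [← hasSum_nat_add_iff' 1]
  have hshift := (hasSum_nat_add_iff' 1).mpr hG
  convert hshift.add (hG.mul_left (s ^ 2)) using 1
  · ext m
    simp only [c]
    rw [← t_succ_sub_t m n]
    ring
  · simp only [c, t_succ, zero_add, sum_range_one]
    ring

theorem summable_neg_one_pow_mul_t_mul_pow (n : ℕ) {s : ℝ} (hs0 : 0 ≤ s) (hs1 : s < 1) :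
    Summable fun m ↦ (-1) ^ m * t m n * s ^ (2 * m) := by
  refine (summable_t_mul_pow n (sq_nonneg s) (pow_lt_one₀ hs0 hs1 two_ne_zero)).of_norm_bounded
    fun m ↦ ?_
  rw [norm_mul, norm_mul, norm_pow, norm_neg, norm_one, one_pow, one_mul, Real.norm_eq_abs,
    Real.norm_eq_abs, abs_of_pos (t_pos m n), abs_of_nonneg (by positivity), pow_mul]

theorem hasSum_tSummand_mul_pow_of_hasSum_t (n : ℕ) {y : ℝ} (hy0 : 0 ≤ y) (hy1 : y < 1)
    (ht : ∀ s, 0 ≤ s → s < 1 →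
      HasSum (fun m ↦ (-1) ^ m * t m n * s ^ (2 * m + n))
        ((2 * arctan s) ^ n / (n ! * (1 + s ^ 2)))) :
    HasSum (fun m ↦ (-1) ^ m * tSummand n m * y ^ (2 * m + n + 1))
      ((2 * arctan y) ^ (n + 1) / (n + 1)!) := by
  have hc : Summable fun m ↦ |2 * ((-1) ^ m * t m n)| * y ^ (2 * m + n) := by
    refine ((summable_t_mul_pow n (sq_nonneg y) (pow_lt_one₀ hy0 hy1 two_ne_zero)).mul_left
      (2 * y ^ n)).congr fun m ↦ ?_
    rw [abs_mul, abs_mul, abs_pow, abs_neg, abs_one, one_pow, one_mul, abs_two,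
      abs_of_pos (t_pos m n), pow_add, pow_mul]
    ring
  have hsum := hasSum_integral_tsum_mul_pow _ (fun m ↦ 2 * m + n) hy0 hc
  have hintegrand : ∀ s ∈ Set.uIcc 0 y, ∑' m, 2 * ((-1) ^ m * t m n) * s ^ (2 * m + n) =
      2 * (2 * arctan s) ^ n / (n ! * (1 + s ^ 2)) := by
    intro s hs
    rw [Set.uIcc_of_le hy0] at hs
    simp_rw [mul_assoc (2 : ℝ), tsum_mul_left]
    rw [(ht s hs.1 (hs.2.trans_lt hy1)).tsum_eq, mul_div_assoc]
  rw [intervalIntegral.integral_congr hintegrand, integral_two_arctan_pow] at hsum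
  refine hsum.congr_fun fun m ↦ ?_
  simp only [tSummand]
  push_cast
  field_simp
  ring

theorem hasSum_t_mul_pow (n : ℕ) {s : ℝ} (hs0 : 0 ≤ s) (hs1 : s < 1) :
    HasSum (fun m ↦ (-1) ^ m * t m n * s ^ (2 * m + n))
      ((2 * arctan s) ^ n / (n ! * (1 + s ^ 2))) := by
  induction n generalizing s with
  | zero =>
    simpa using hasSum_t_zero_mul_pow (abs_lt.mpr ⟨by linarith, hs1⟩)
  | succ n ih =>
    have hu := hasSum_tSummand_mul_pow_of_hasSum_t n hs0 hs1 fun s h0 h1 ↦ ih h0 h1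
    obtain ⟨G, hG⟩ := summable_neg_one_pow_mul_t_mul_pow (n + 1) hs0 hs1
    have hval : s ^ (n + 1) * ((1 + s ^ 2) * G) = (2 * arctan s) ^ (n + 1) / (n + 1)! :=
      ((hasSum_tSummand_mul_pow_of_hasSum_t_succ n hG).mul_left _).unique
        (hu.congr_fun fun m ↦ by ring)
    have hvalue : (2 * arctan s) ^ (n + 1) / ((n + 1)! * (1 + s ^ 2)) = s ^ (n + 1) * G := by
      rw [← div_div, ← hval]
      field_simp
    rw [hvalue]
    exact (hG.mul_left _).congr_fun fun m ↦ by ring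

theorem hasSum_tSummand_mul_pow (n : ℕ) {s : ℝ} (hs0 : 0 ≤ s) (hs1 : s < 1) :
    HasSum (fun m ↦ (-1) ^ m * tSummand n m * s ^ (2 * m + n + 1))
      ((2 * arctan s) ^ (n + 1) / (n + 1)!) :=
  hasSum_tSummand_mul_pow_of_hasSum_t n hs0 hs1 fun _ ↦ hasSum_t_mul_pow n

theorem tendsto_tsum_tSummand_mul_pow_nhdsLT_one (n : ℕ) :
    Tendsto (fun x ↦ ∑' m, (-1) ^ m * tSummand n m * x ^ m) (𝓝[<] 1)
      (𝓝 (π ^ (n + 1) / (2 ^ (n + 1) * (n + 1)!))) := by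
  set g : ℝ → ℝ := fun x ↦ (2 * arctan √x) ^ (n + 1) / ((n + 1)! * √x ^ (n + 1))
  have hg : ∀ x ∈ Set.Ioo (0 : ℝ) 1, ∑' m, (-1) ^ m * tSummand n m * x ^ m = g x := by
    rintro x ⟨hx0, hx1⟩
    have hs : 0 < √x := Real.sqrt_pos.mpr hx0
    have hsum := hasSum_tSummand_mul_pow n hs.le ((Real.sqrt_lt' one_pos).mpr (by rwa [one_pow]))
    have hterm : ∀ m, (-1) ^ m * tSummand n m * √x ^ (2 * m + n + 1) =
        (-1) ^ m * tSummand n m * x ^ m * √x ^ (n + 1) := by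
      intro m
      rw [add_assoc, pow_add, pow_mul, Real.sq_sqrt hx0.le]
      ring
    have hvalue : (2 * arctan √x) ^ (n + 1) / (n + 1)! = g x * √x ^ (n + 1) := by
      simp only [g]
      field_simp
    simp_rw [hterm, hvalue] at hsum
    exact ((hasSum_mul_right_iff (pow_ne_zero _ hs.ne')).mp hsum).tsum_eq
  have hg1 : g 1 = π ^ (n + 1) / (2 ^ (n + 1) * (n + 1)!) := by
    simp only [g, Real.sqrt_one, arctan_one, one_pow, mul_one]
    rw [show 2 * (π / 4) = π / 2 by ring, div_pow, div_div]
  have hgc : ContinuousAt g 1 := by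
    refine ContinuousAt.div (by fun_prop) (by fun_prop) ?_
    simp [Nat.factorial_ne_zero]
  rw [← hg1]
  exact (hgc.tendsto.mono_left nhdsWithin_le_nhds).congr'
    (eventuallyEq_of_mem (Ioo_mem_nhdsLT zero_lt_one) hg).symm

/-- Equation (24) of the paper: for `n ≥ 1`, the partial sums
`∑_{m=0}^{K} (−1)^m · t_m(n-1)/(m + n/2)` converge, as `K → ∞`, to
`π^n / (2^n · n!)`. -/
theorem arctan_power_at_one (n : ℕ) (hn : 1 ≤ n) :
    Tendsto
      (fun K : ℕ =>
        ∑ m ∈ Finset.range (K + 1), (-1 : ℝ) ^ m * t m (n - 1) / ((m : ℝ) + (n : ℝ) / 2))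
      atTop (nhds (π ^ n / (2 ^ n * (Nat.factorial n : ℝ)))) := by
  obtain ⟨N, rfl⟩ := Nat.exists_eq_add_of_le' hn
  obtain ⟨l, hl⟩ := exists_tendsto_alternating_series_of_tendsto_zero_of_summable_abs_sub
    (tendsto_tSummand N) (summable_abs_tSummand_sub_tSummand_succ N)
  have hl_eq : l = π ^ (N + 1) / (2 ^ (N + 1) * (N + 1)!) :=
    tendsto_nhds_unique (Real.tendsto_tsum_powerSeries_nhdsWithin_lt hl)
      (tendsto_tsum_tSummand_mul_pow_nhdsLT_one N)
  rw [← hl_eq]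
  refine (hl.comp (tendsto_add_atTop_nat 1)).congr fun K ↦ sum_congr rfl fun m _ ↦ ?_
  simp only [tSummand, Nat.add_sub_cancel]
  push_cast
  ring
end
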